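/- Suppose n ≥ 4 is even, γ ≠ 0, and β_t ≠ 0 for some 4 ≤ t ≤ n. Then every even derivation of H(β₄,…,β_n,δ,γ) with δ = 0 is nilpotent. (When n is odd, the only exception is t = (n+3)/2: if t ≠ (n+3)/2 then again every even derivation is nilpotent.) -/

import Mathlib

/-!
Write `d y₁ = ∑ c_k y_k`. Applying `d` to `y₁y₁ = e₁`, and then inducting along `e_k e₁ = e_{k+1}`
and `y_k e₁ = y_{k+1}`, shows that up to terms of higher index `d e_k = (2k-2)c₁ e_k` for `k ≥ 3`
and `d y_k = (2k-1)c₁ y_k` for `k ≥ 2`; applying it to `e₂e₁ = 0` leaves `d e₂ = b₂ e₂ + b_n e_n`.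
Then `e₂e₂ = γ e_n` gives `b₂ = (n-1)c₁`, and the coefficient of `y_t` in `d(y₂e₂)`, where
`y₂e₂ = ∑ β_k y_k`, gives `b₂ = 2(t-2)c₁`. So `(n+3-2t)c₁ = 0`, whence `c₁ = b₂ = 0`, and then `d`
strictly raises the filtration by index, so `dⁿ = 0`.
-/

open Finset

theorem Module.End.pow_eq_zero_of_le_comap {R M : Type*} [Semiring R] [AddCommMonoid M]
    [Module R M] {f : Module.End R M} {W : ℕ → Submodule R M} {N : ℕ} (h0 : W 0 = ⊤)
    (hN : W N = ⊥) (hf : ∀ m, W m ≤ (W (m + 1)).comap f) : f ^ N = 0 := by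
  have hpow : ∀ m x, (f ^ m) x ∈ W m := by
    intro m
    induction m with
    | zero => simp [h0]
    | succ m ih => intro x; rw [pow_succ', Module.End.mul_apply]; exact hf m (ih x)
  ext x
  simpa [hN] using hpow N x

section ShiftSum

variable {R M N : Type*} [CommSemiring R] [AddCommMonoid M] [Module R M] [AddCommMonoid N]
  [Module R N] {n : ℕ} {c : ℕ → R}

/-- With `d y₁ = ∑ c_j y_j`, this is the part of `d e_k` and `d y_k` of index above `k`. -/
def shiftSum (n : ℕ) (c : ℕ → R) (v : ℕ → M) (k : ℕ) : M :=
  ∑ j ∈ Icc 2 n, c j • v (k + j - 1)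

theorem map_shiftSum (f : M →ₗ[R] N) {v : ℕ → M} {w : ℕ → N} {k : ℕ}
    (hf : ∀ m, k < m → f (v m) = w m) : f (shiftSum n c v k) = shiftSum n c w k := by
  simp only [shiftSum, map_sum, map_smul]
  refine sum_congr rfl fun j hj => ?_
  rw [hf _ (by simp only [mem_Icc] at hj; omega)]

theorem shiftSum_comp_succ (v : ℕ → M) (k : ℕ) :
    shiftSum n c (fun m => v (m + 1)) k = shiftSum n c v (k + 1) :=
  sum_congr rfl fun j hj => by
    simp only [mem_Icc] at hj
    rw [show k + 1 + j - 1 = k + j - 1 + 1 by omega]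

theorem shiftSum_smul (a : R) (v : ℕ → M) (k : ℕ) :
    shiftSum n c (fun m => a • v m) k = a • shiftSum n c v k := by
  simp only [shiftSum, smul_sum, smul_comm a]

theorem shiftSum_zero (k : ℕ) : shiftSum n c (fun _ => (0 : M)) k = 0 := by
  simp [shiftSum]

theorem shiftSum_eq_zero {v : ℕ → M} {k : ℕ} (hv : ∀ m, n < m → v m = 0) (hk : n ≤ k) :
    shiftSum n c v k = 0 :=
  sum_eq_zero fun j hj => by simp only [mem_Icc] at hj; rw [hv _ (by omega), smul_zero]

theorem shiftSum_mem {v : ℕ → M} {k : ℕ} {p : Submodule R M} (hv : ∀ m, k < m → v m ∈ p) :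
    shiftSum n c v k ∈ p :=
  p.sum_mem fun j hj => p.smul_mem _ (hv _ (by simp only [mem_Icc] at hj; omega))

theorem sum_Icc_one_eq_smul_add_shiftSum (v : ℕ → M) (hn : 1 ≤ n) :
    ∑ k ∈ Icc 1 n, c k • v k = c 1 • v 1 + shiftSum n c v 1 := by
  rw [← insert_Icc_add_one_left_eq_Icc hn, sum_insert (by simp)]
  simp [shiftSum]

theorem sum_smul_shiftSum (s : Finset ℕ) (b : ℕ → R) (v : ℕ → M) :
    ∑ i ∈ s, b i • shiftSum n c v i = shiftSum n c (fun m => ∑ i ∈ s, b i • v (m + i - 2)) 2 := by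
  simp only [shiftSum, smul_sum]
  rw [sum_comm]
  refine sum_congr rfl fun j hj => sum_congr rfl fun i _ => ?_
  simp only [mem_Icc] at hj
  rw [smul_comm, show 2 + j - 1 + i - 2 = i + j - 1 by omega]

end ShiftSum

structure IsBasisSegment {R M κ : Type*} [Semiring R] [AddCommMonoid M] [Module R M] {n : ℕ}
    (bas : Module.Basis κ R M) (ι : Fin n → κ) (v : ℕ → M) : Prop where
  injective : Function.Injective ι
  apply_eq : ∀ k (hk1 : 1 ≤ k) (hkn : k ≤ n), v k = bas (ι ⟨k - 1, by omega⟩)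
  eq_zero : ∀ k, ¬(1 ≤ k ∧ k ≤ n) → v k = 0

namespace IsBasisSegment

variable {R M κ : Type*} [Semiring R] [AddCommMonoid M] [Module R M] {n : ℕ}
  {bas : Module.Basis κ R M} {ι : Fin n → κ} {v : ℕ → M}

theorem apply_succ (hv : IsBasisSegment bas ι v) (i : Fin n) : v (i + 1) = bas (ι i) := by
  rw [hv.apply_eq (i + 1) (by omega) i.2]
  simp

theorem mem_span (hv : IsBasisSegment bas ι v) (k : ℕ) :
    v k ∈ Submodule.span R (Set.range fun i => bas (ι i)) := by
  by_cases hk : 1 ≤ k ∧ k ≤ n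
  · rw [hv.apply_eq k hk.1 hk.2]
    exact Submodule.subset_span ⟨_, rfl⟩
  · rw [hv.eq_zero k hk]
    exact zero_mem _

theorem ne_zero [Nontrivial R] (hv : IsBasisSegment bas ι v) {k : ℕ} (hk1 : 1 ≤ k) (hkn : k ≤ n) :
    v k ≠ 0 := by
  rw [hv.apply_eq k hk1 hkn]
  exact bas.ne_zero _

theorem repr_apply (hv : IsBasisSegment bas ι v) (k : ℕ) (i : Fin n) :
    bas.repr (v k) (ι i) = if k = i + 1 then 1 else 0 := by
  classical
  by_cases hk : 1 ≤ k ∧ k ≤ n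
  · rw [hv.apply_eq k hk.1 hk.2, bas.repr_self, Finsupp.single_apply]
    simp only [hv.injective.eq_iff, Fin.ext_iff]
    split_ifs <;> first | rfl | omega
  · rw [hv.eq_zero k hk, map_zero, Finsupp.zero_apply, if_neg (by omega)]

theorem eq_zero_of_sum_smul_comp_eq_zero (hv : IsBasisSegment bas ι v) {s : Finset ℕ}
    {f : ℕ → R} {g : ℕ → ℕ} {k : ℕ} (h : ∑ j ∈ s, f j • v (g j) = 0) (hk : k ∈ s)
    (hg : ∀ j ∈ s, j ≠ k → g j ≠ g k) (hk1 : 1 ≤ g k) (hkn : g k ≤ n) : f k = 0 := by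
  have hcoord := congrArg (fun x => bas.repr x (ι ⟨g k - 1, by omega⟩)) h
  simp only [map_sum, map_smul, Finsupp.coe_finsetSum, Finset.sum_apply, Finsupp.smul_apply,
    hv.repr_apply, smul_eq_mul, mul_ite, mul_one, mul_zero, map_zero, Finsupp.zero_apply] at hcoord
  rwa [sum_eq_single_of_mem k hk (fun j hj hjk => if_neg (by have := hg j hj hjk; omega)),
    if_pos (by omega)] at hcoord

theorem exists_eq_sum (hv : IsBasisSegment bas ι v) {x : M}
    (hx : x ∈ Submodule.span R (Set.range fun i => bas (ι i))) :
    ∃ c : ℕ → R, x = ∑ k ∈ Icc 1 n, c k • v k := by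
  obtain ⟨g, rfl⟩ := (Submodule.mem_span_range_iff_exists_fun R).mp hx
  refine ⟨fun k => if h : 1 ≤ k ∧ k ≤ n then g ⟨k - 1, by omega⟩ else 0, ?_⟩
  refine sum_bij (fun i _ => i.1 + 1) (fun i _ => by simp)
    (fun i _ j _ h => Fin.ext (by simpa using h))
    (fun k hk => ⟨⟨k - 1, by simp only [mem_Icc] at hk; omega⟩, mem_univ _, by
      simp only [mem_Icc] at hk; simp; omega⟩) (fun i _ => ?_)
  dsimp only
  rw [dif_pos ⟨by omega, i.2⟩, hv.apply_succ]
  simp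

end IsBasisSegment

section Filtration

variable (R : Type*) {M : Type*} [CommSemiring R] [AddCommMonoid M] [Module R M]

def indexFiltration (e y : ℕ → M) (m : ℕ) : Submodule R M :=
  Submodule.span R (e '' Set.Ioi m ∪ y '' Set.Ioi m)

variable {R} {e y : ℕ → M}

theorem indexFiltration_antitone : Antitone (indexFiltration R e y) := fun _ _ h =>
  Submodule.span_mono (Set.union_subset_union (Set.image_mono (Set.Ioi_subset_Ioi h))
    (Set.image_mono (Set.Ioi_subset_Ioi h)))

theorem left_mem_indexFiltration {m k : ℕ} (h : m < k) : e k ∈ indexFiltration R e y m :=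
  Submodule.subset_span (Or.inl ⟨k, h, rfl⟩)

theorem right_mem_indexFiltration {m k : ℕ} (h : m < k) : y k ∈ indexFiltration R e y m :=
  Submodule.subset_span (Or.inr ⟨k, h, rfl⟩)

theorem pow_eq_zero_of_mem_indexFiltration {n : ℕ} {bas : Module.Basis (Fin n ⊕ Fin n) R M}
    (he : IsBasisSegment bas Sum.inl e) (hy : IsBasisSegment bas Sum.inr y)
    {d : Module.End R M} (hde : ∀ k, d (e k) ∈ indexFiltration R e y k)
    (hdy : ∀ k, d (y k) ∈ indexFiltration R e y k) : d ^ n = 0 := by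
  refine Module.End.pow_eq_zero_of_le_comap (W := indexFiltration R e y) ?_ ?_
    fun m => Submodule.span_le.mpr ?_
  · refine eq_top_iff.mpr (bas.span_eq ▸ Submodule.span_le.mpr ?_)
    rintro _ ⟨i | i, rfl⟩
    · exact he.apply_succ i ▸ left_mem_indexFiltration (Nat.succ_pos _)
    · exact hy.apply_succ i ▸ right_mem_indexFiltration (Nat.succ_pos _)
  · refine Submodule.span_eq_bot.mpr ?_
    rintro _ (⟨k, hk, rfl⟩ | ⟨k, hk, rfl⟩)
    · exact he.eq_zero k (by simp only [Set.mem_Ioi] at hk; omega)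
    · exact hy.eq_zero k (by simp only [Set.mem_Ioi] at hk; omega)
  · rintro _ (⟨k, hk, rfl⟩ | ⟨k, hk, rfl⟩)
    · exact indexFiltration_antitone (Nat.succ_le_of_lt hk) (hde k)
    · exact indexFiltration_antitone (Nat.succ_le_of_lt hk) (hdy k)

end Filtration

def IsDerivation {R V : Type*} [CommSemiring R] [AddCommMonoid V] [Module R V]
    (br : V →ₗ[R] V →ₗ[R] V) (d : Module.End R V) : Prop :=
  ∀ u v, d (br u v) = br (d u) v + br u (d v)

/-- Part of the multiplication table (4) of `H(β₄,…,β_n,δ,γ)`. -/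
structure HMulTable {V : Type*} [AddCommGroup V] [Module ℂ V] (n : ℕ) (β : ℕ → ℂ) (γ : ℂ)
    (br : V →ₗ[ℂ] V →ₗ[ℂ] V) (e y : ℕ → V) : Prop where
  e_eq_zero : ∀ k, ¬(1 ≤ k ∧ k ≤ n) → e k = 0
  y_eq_zero : ∀ k, ¬(1 ≤ k ∧ k ≤ n) → y k = 0
  ee_one : ∀ i, 1 ≤ i → i ≤ n →
    br (e i) (e 1) = if i = 1 then e 3 else if i = 2 then 0 else e (i + 1)
  ee_two_two : br (e 2) (e 2) = γ • e n
  ee_two : ∀ i, 3 ≤ i → i ≤ n → br (e i) (e 2) = ∑ k ∈ Icc 4 n, β k • e (i + k - 2)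
  ee_eq_zero : ∀ i j, 1 ≤ i → i ≤ n → 3 ≤ j → j ≤ n → br (e i) (e j) = 0
  ye_one : ∀ j, 1 ≤ j → j ≤ n → br (y j) (e 1) = y (j + 1)
  ye_two : ∀ j, 2 ≤ j → j ≤ n → br (y j) (e 2) = ∑ k ∈ Icc 4 n, β k • y (j + k - 2)
  ye_eq_zero : ∀ j i, 1 ≤ j → j ≤ n → 3 ≤ i → i ≤ n → br (y j) (e i) = 0
  ey_one : ∀ i, 1 ≤ i → i ≤ n → br (e i) (y 1) =
    if i = 1 then (1 / 2 : ℂ) • y 2 else if i = 2 then 0 else (1 / 2 : ℂ) • y i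
  ey_eq_zero : ∀ i j, 1 ≤ i → i ≤ n → 2 ≤ j → j ≤ n → br (e i) (y j) = 0
  yy_one : ∀ j, 1 ≤ j → j ≤ n → br (y j) (y 1) = if j = 1 then e 1 else e (j + 1)
  yy_eq_zero : ∀ j k, 1 ≤ j → j ≤ n → 2 ≤ k → k ≤ n → br (y j) (y k) = 0

namespace HMulTable

variable {V : Type*} [AddCommGroup V] [Module ℂ V] {n : ℕ} {β : ℕ → ℂ} {γ : ℂ}
  {br : V →ₗ[ℂ] V →ₗ[ℂ] V} {e y : ℕ → V} {d : Module.End ℂ V} {c : ℕ → ℂ}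

theorem e_of_lt (H : HMulTable n β γ br e y) {k : ℕ} (hk : n < k) : e k = 0 :=
  H.e_eq_zero k (by omega)

theorem y_of_lt (H : HMulTable n β γ br e y) {k : ℕ} (hk : n < k) : y k = 0 :=
  H.y_eq_zero k (by omega)

theorem ee_one_of_three_le (H : HMulTable n β γ br e y) {m : ℕ} (hm : 3 ≤ m) :
    br (e m) (e 1) = e (m + 1) := by
  rcases le_or_gt m n with h | h
  · rw [H.ee_one m (by omega) h, if_neg (by omega), if_neg (by omega)]
  · rw [H.e_of_lt h, H.e_of_lt (by omega : n < m + 1), map_zero, LinearMap.zero_apply]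

theorem ee_eq_zero_of_three_le (H : HMulTable n β γ br e y) (i : ℕ) {m : ℕ} (hm : 3 ≤ m) :
    br (e i) (e m) = 0 := by
  by_cases hi : 1 ≤ i ∧ i ≤ n
  · rcases le_or_gt m n with h | h
    · exact H.ee_eq_zero i m hi.1 hi.2 hm h
    · rw [H.e_of_lt h, map_zero]
  · rw [H.e_eq_zero i hi, map_zero, LinearMap.zero_apply]

theorem ee_two_last (H : HMulTable n β γ br e y) (hn : 3 ≤ n) : br (e n) (e 2) = 0 := by
  rw [H.ee_two n hn le_rfl]
  exact sum_eq_zero fun k hk => by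
    simp only [mem_Icc] at hk
    rw [H.e_of_lt (by omega), smul_zero]

theorem ye_one_of_one_le (H : HMulTable n β γ br e y) {m : ℕ} (hm : 1 ≤ m) :
    br (y m) (e 1) = y (m + 1) := by
  rcases le_or_gt m n with h | h
  · exact H.ye_one m hm h
  · rw [H.y_of_lt h, H.y_of_lt (by omega : n < m + 1), map_zero, LinearMap.zero_apply]

theorem ye_two_of_two_le (H : HMulTable n β γ br e y) {m : ℕ} (hm : 2 ≤ m) :
    br (y m) (e 2) = ∑ k ∈ Icc 4 n, β k • y (m + k - 2) := by
  rcases le_or_gt m n with h | h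
  · exact H.ye_two m hm h
  · rw [H.y_of_lt h, map_zero, LinearMap.zero_apply]
    exact (sum_eq_zero fun k hk => by
      simp only [mem_Icc] at hk
      rw [H.y_of_lt (by omega), smul_zero]).symm

theorem ye_eq_zero_of_three_le (H : HMulTable n β γ br e y) (j : ℕ) {m : ℕ} (hm : 3 ≤ m) :
    br (y j) (e m) = 0 := by
  by_cases hj : 1 ≤ j ∧ j ≤ n
  · rcases le_or_gt m n with h | h
    · exact H.ye_eq_zero j m hj.1 hj.2 hm h
    · rw [H.e_of_lt h, map_zero]
  · rw [H.y_eq_zero j hj, map_zero, LinearMap.zero_apply]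

theorem ey_one_of_three_le (H : HMulTable n β γ br e y) {m : ℕ} (hm : 3 ≤ m) :
    br (e m) (y 1) = (1 / 2 : ℂ) • y m := by
  rcases le_or_gt m n with h | h
  · rw [H.ey_one m (by omega) h, if_neg (by omega), if_neg (by omega)]
  · rw [H.e_of_lt h, H.y_of_lt h, map_zero, LinearMap.zero_apply, smul_zero]

theorem ey_eq_zero_of_two_le (H : HMulTable n β γ br e y) (i : ℕ) {m : ℕ} (hm : 2 ≤ m) :
    br (e i) (y m) = 0 := by
  by_cases hi : 1 ≤ i ∧ i ≤ n
  · rcases le_or_gt m n with h | h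
    · exact H.ey_eq_zero i m hi.1 hi.2 hm h
    · rw [H.y_of_lt h, map_zero]
  · rw [H.e_eq_zero i hi, map_zero, LinearMap.zero_apply]

theorem yy_one_of_two_le (H : HMulTable n β γ br e y) {m : ℕ} (hm : 2 ≤ m) :
    br (y m) (y 1) = e (m + 1) := by
  rcases le_or_gt m n with h | h
  · rw [H.yy_one m (by omega) h, if_neg (by omega)]
  · rw [H.y_of_lt h, H.e_of_lt (by omega : n < m + 1), map_zero, LinearMap.zero_apply]

theorem yy_eq_zero_of_two_le (H : HMulTable n β γ br e y) (j : ℕ) {m : ℕ} (hm : 2 ≤ m) :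
    br (y j) (y m) = 0 := by
  by_cases hj : 1 ≤ j ∧ j ≤ n
  · rcases le_or_gt m n with h | h
    · exact H.yy_eq_zero j m hj.1 hj.2 hm h
    · rw [H.y_of_lt h, map_zero]
  · rw [H.y_eq_zero j hj, map_zero, LinearMap.zero_apply]

theorem deriv_e_one (H : HMulTable n β γ br e y) (hd : IsDerivation br d) (hn : 1 ≤ n)
    (hy1 : d (y 1) = c 1 • y 1 + shiftSum n c y 1) :
    d (e 1) = (2 * c 1) • e 1 + shiftSum n c e 2 := by
  have hyy : br (y 1) (y 1) = e 1 := by rw [H.yy_one 1 le_rfl hn, if_pos rfl]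
  have hleft : br (shiftSum n c y 1) (y 1) = shiftSum n c e 2 := by
    rw [← LinearMap.flip_apply, map_shiftSum _ (w := fun m => e (m + 1))
      fun m hm => H.yy_one_of_two_le hm, shiftSum_comp_succ]
  have hright : br (y 1) (shiftSum n c y 1) = 0 := by
    rw [map_shiftSum _ (w := fun _ => 0) fun m hm => H.yy_eq_zero_of_two_le 1 hm, shiftSum_zero]
  have h := hd (y 1) (y 1)
  rw [hyy, hy1, map_add, map_smul, LinearMap.add_apply, LinearMap.smul_apply, hyy, hleft, map_add,
    map_smul, hyy, hright] at h
  rw [h]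
  module

theorem deriv_e_of_three_le (H : HMulTable n β γ br e y) (hd : IsDerivation br d) (hn : 1 ≤ n)
    (he1 : d (e 1) = (2 * c 1) • e 1 + shiftSum n c e 2) {k : ℕ} (hk : 3 ≤ k) :
    d (e k) = ((2 * k - 2) * c 1) • e k + shiftSum n c e k := by
  have hright : ∀ i, br (e i) (d (e 1)) = (2 * c 1) • br (e i) (e 1) := fun i => by
    rw [he1, map_add, map_smul, map_shiftSum _ (w := fun _ => 0)
      fun m hm => H.ee_eq_zero_of_three_le i hm, shiftSum_zero, add_zero]
  have hshift : ∀ k, 2 ≤ k → br (shiftSum n c e k) (e 1) = shiftSum n c e (k + 1) :=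
    fun k hk => by
    rw [← LinearMap.flip_apply, map_shiftSum _ (w := fun m => e (m + 1))
      fun m hm => H.ee_one_of_three_le (by omega), shiftSum_comp_succ]
  induction k, hk using Nat.le_induction with
  | base =>
    have hee : br (e 1) (e 1) = e 3 := by rw [H.ee_one 1 le_rfl hn, if_pos rfl]
    have h := hd (e 1) (e 1)
    rw [hee, hright, hee, he1, map_add, map_smul, LinearMap.add_apply, LinearMap.smul_apply, hee,
      hshift 2 le_rfl] at h
    rw [h]
    push_cast
    module
  | succ k hk ih =>
    have h := hd (e k) (e 1)
    rw [H.ee_one_of_three_le hk, hright, H.ee_one_of_three_le hk, ih, map_add, map_smul,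
      LinearMap.add_apply, LinearMap.smul_apply, H.ee_one_of_three_le hk, hshift k (by omega)] at h
    rw [h]
    push_cast
    module

theorem deriv_y_of_two_le (H : HMulTable n β γ br e y) (hd : IsDerivation br d) (hn : 1 ≤ n)
    (hy1 : d (y 1) = c 1 • y 1 + shiftSum n c y 1)
    (he1 : d (e 1) = (2 * c 1) • e 1 + shiftSum n c e 2) {k : ℕ} (hk : 2 ≤ k) :
    d (y k) = ((2 * k - 1) * c 1) • y k + shiftSum n c y k := by
  induction k, hk using Nat.le_induction with
  | base =>
    have hey : br (e 1) (y 1) = (1 / 2 : ℂ) • y 2 := by rw [H.ey_one 1 le_rfl hn, if_pos rfl]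
    have hleft : br (shiftSum n c e 2) (y 1) = (1 / 2 : ℂ) • shiftSum n c y 2 := by
      rw [← LinearMap.flip_apply, map_shiftSum _ (w := fun m => (1 / 2 : ℂ) • y m)
        fun m hm => H.ey_one_of_three_le (by omega), shiftSum_smul]
    have hright : br (e 1) (shiftSum n c y 1) = 0 := by
      rw [map_shiftSum _ (w := fun _ => 0) fun m hm => H.ey_eq_zero_of_two_le 1 (by omega),
        shiftSum_zero]
    have h := hd (e 1) (y 1)
    rw [hey, map_smul, he1, hy1, map_add, map_smul, LinearMap.add_apply, LinearMap.smul_apply,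
      hey, hleft, map_add, map_smul, hey, hright] at h
    calc d (y 2) = (2 : ℂ) • ((1 / 2 : ℂ) • d (y 2)) := by rw [smul_smul]; norm_num
      _ = _ := by rw [h]; push_cast; module
  | succ k hk ih =>
    have hright : br (y k) (d (e 1)) = (2 * c 1) • y (k + 1) := by
      rw [he1, map_add, map_smul, H.ye_one_of_one_le (by omega), map_shiftSum _ (w := fun _ => 0)
        fun m hm => H.ye_eq_zero_of_three_le k (by omega), shiftSum_zero, add_zero]
    have hleft : br (shiftSum n c y k) (e 1) = shiftSum n c y (k + 1) := by
      rw [← LinearMap.flip_apply, map_shiftSum _ (w := fun m => y (m + 1))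
        fun m hm => H.ye_one_of_one_le (by omega), shiftSum_comp_succ]
    have h := hd (y k) (e 1)
    rw [H.ye_one_of_one_le (by omega), hright, ih, map_add, map_smul, LinearMap.add_apply,
      LinearMap.smul_apply, H.ye_one_of_one_le (by omega), hleft] at h
    rw [h]
    push_cast
    module

section Coefficients

variable {κ : Type*} {bas : Module.Basis κ ℂ V} {ι : Fin n → κ}

theorem deriv_e_two (H : HMulTable n β γ br e y) (hE : IsBasisSegment bas ι e)
    (hd : IsDerivation br d) (hn : 3 ≤ n) (he1 : d (e 1) = (2 * c 1) • e 1 + shiftSum n c e 2)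
    {b : ℕ → ℂ} (hb : d (e 2) = ∑ k ∈ Icc 1 n, b k • e k) :
    d (e 2) = b 2 • e 2 + b n • e n := by
  -- `e_k e₁ = e_{g k}` for `1 ≤ k ≤ n`, as `e₀ = 0`
  let g : ℕ → ℕ := fun k => if k = 1 then 3 else if k = 2 then 0 else k + 1
  have hee : br (e 2) (e 1) = 0 := by
    rw [H.ee_one 2 (by omega) (by omega), if_neg (by omega), if_pos rfl]
  have hsum : ∑ k ∈ Icc 1 n, b k • e (g k) = 0 := by
    have h := hd (e 2) (e 1)
    rw [hee, map_zero, he1, map_add, map_smul, hee, smul_zero, zero_add, map_shiftSum _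
      (w := fun _ => 0) fun m hm => H.ee_eq_zero_of_three_le 2 hm, shiftSum_zero, add_zero, hb,
      map_sum, LinearMap.sum_apply] at h
    rw [h]
    refine sum_congr rfl fun k hk => ?_
    simp only [mem_Icc] at hk
    rw [map_smul, LinearMap.smul_apply, H.ee_one k hk.1 hk.2]
    simp only [g]
    split_ifs <;> simp [H.e_eq_zero 0]
  have hvanish : ∀ k ∈ Icc 1 n, k ≠ 2 ∧ k ≠ n → b k • e k = 0 := fun k hk hk' => by
    have hg : ∀ j ∈ Icc 1 n, j ≠ k → g j ≠ g k := fun j hj hjk => by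
      simp only [mem_Icc] at hj hk
      simp only [g]
      split_ifs <;> omega
    have hgk : 1 ≤ g k ∧ g k ≤ n := by
      simp only [mem_Icc] at hk
      simp only [g]
      split_ifs <;> omega
    rw [hE.eq_zero_of_sum_smul_comp_eq_zero hsum hk hg hgk.1 hgk.2, zero_smul]
  rw [hb, sum_eq_add_of_mem 2 n (by simp; omega) (by simp; omega) (by omega) hvanish]

theorem deriv_e_two_coeff_eq_of_gamma_ne_zero (H : HMulTable n β γ br e y)
    (hE : IsBasisSegment bas ι e) (hd : IsDerivation br d) (hn : 3 ≤ n)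
    (he1 : d (e 1) = (2 * c 1) • e 1 + shiftSum n c e 2) (hγ : γ ≠ 0) {a b : ℂ}
    (he2 : d (e 2) = a • e 2 + b • e n) : a = (n - 1) * c 1 := by
  have hen : d (e n) = ((2 * n - 2) * c 1) • e n := by
    rw [H.deriv_e_of_three_le hd (by omega) he1 hn, shiftSum_eq_zero (fun m => H.e_of_lt) le_rfl,
      add_zero]
  have hleft : br (d (e 2)) (e 2) = (a * γ) • e n := by
    rw [he2, map_add, map_smul, map_smul, LinearMap.add_apply, LinearMap.smul_apply,
      LinearMap.smul_apply, H.ee_two_two, H.ee_two_last hn, smul_zero, add_zero, smul_smul]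
  have hright : br (e 2) (d (e 2)) = (a * γ) • e n := by
    rw [he2, map_add, map_smul, map_smul, H.ee_two_two, H.ee_eq_zero_of_three_le 2 hn, smul_zero,
      add_zero, smul_smul]
  have h := hd (e 2) (e 2)
  rw [H.ee_two_two, map_smul, hen, hleft, hright, smul_smul, ← add_smul, ← sub_eq_zero,
    ← sub_smul] at h
  have hcoeff := (smul_eq_zero.mp h).resolve_right (hE.ne_zero (by omega) le_rfl)
  exact mul_left_cancel₀ (mul_ne_zero two_ne_zero hγ) (by linear_combination -hcoeff)

theorem deriv_e_two_coeff_eq_of_beta_ne_zero (H : HMulTable n β γ br e y)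
    (hY : IsBasisSegment bas ι y) (hd : IsDerivation br d)
    (hy1 : d (y 1) = c 1 • y 1 + shiftSum n c y 1)
    (he1 : d (e 1) = (2 * c 1) • e 1 + shiftSum n c e 2) {t : ℕ} (ht1 : 4 ≤ t) (ht2 : t ≤ n)
    (hβ : β t ≠ 0) {a b : ℂ} (he2 : d (e 2) = a • e 2 + b • e n) :
    a = 2 * (t - 2) * c 1 := by
  have hye : br (y 2) (e 2) = ∑ k ∈ Icc 4 n, β k • y k := by
    rw [H.ye_two 2 le_rfl (by omega)]
    exact sum_congr rfl fun k _ => by rw [Nat.add_sub_cancel_left]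
  have hdY : d (∑ k ∈ Icc 4 n, β k • y k) = ∑ k ∈ Icc 4 n, (β k * ((2 * k - 1) * c 1)) • y k
      + ∑ k ∈ Icc 4 n, β k • shiftSum n c y k := by
    rw [map_sum, ← sum_add_distrib]
    refine sum_congr rfl fun k hk => ?_
    simp only [mem_Icc] at hk
    rw [map_smul, H.deriv_y_of_two_le hd (by omega) hy1 he1 (by omega), smul_add, smul_smul]
  have hleft : br (d (y 2)) (e 2) = ∑ k ∈ Icc 4 n, (3 * c 1 * β k) • y k
      + ∑ k ∈ Icc 4 n, β k • shiftSum n c y k := by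
    rw [H.deriv_y_of_two_le hd (by omega) hy1 he1 le_rfl, map_add, map_smul, LinearMap.add_apply,
      LinearMap.smul_apply, hye, smul_sum, sum_smul_shiftSum, ← LinearMap.flip_apply,
      map_shiftSum _ (w := fun m => ∑ i ∈ Icc 4 n, β i • y (m + i - 2))
        fun m hm => H.ye_two_of_two_le (by omega)]
    simp only [smul_smul]
    norm_num
  have hright : br (y 2) (d (e 2)) = ∑ k ∈ Icc 4 n, (a * β k) • y k := by
    rw [he2, map_add, map_smul, map_smul, hye, H.ye_eq_zero_of_three_le 2 (by omega), smul_zero,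
      add_zero, smul_sum]
    simp only [smul_smul]
  have h := hd (y 2) (e 2)
  rw [hye, hdY, hleft, hright, add_right_comm, add_left_inj, ← sum_add_distrib, ← sub_eq_zero,
    ← sum_sub_distrib] at h
  simp only [← add_smul, ← sub_smul] at h
  have hcoeff := hY.eq_zero_of_sum_smul_comp_eq_zero (g := id) h (mem_Icc.mpr ⟨ht1, ht2⟩)
    (fun j _ hj => hj) (by simp; omega) ht2
  exact mul_left_cancel₀ hβ (by linear_combination -hcoeff)

end Coefficients

theorem pow_deriv_eq_zero (H : HMulTable n β γ br e y)
    {bas : Module.Basis (Fin n ⊕ Fin n) ℂ V} (hE : IsBasisSegment bas Sum.inl e)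
    (hY : IsBasisSegment bas Sum.inr y) (hd : IsDerivation br d) (hn : 3 ≤ n)
    (hy1 : d (y 1) = c 1 • y 1 + shiftSum n c y 1) (hc : c 1 = 0) {b : ℂ}
    (he2 : d (e 2) = b • e n) : d ^ n = 0 := by
  have he1 := H.deriv_e_one hd (by omega) hy1
  refine pow_eq_zero_of_mem_indexFiltration hE hY (fun k => ?_) (fun k => ?_)
  · match k with
    | 0 => rw [H.e_eq_zero 0 (by omega), map_zero]; exact zero_mem _
    | 1 =>
      rw [he1, hc, mul_zero, zero_smul, zero_add]
      exact shiftSum_mem fun m hm => left_mem_indexFiltration (by omega)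
    | 2 => rw [he2]; exact Submodule.smul_mem _ _ (left_mem_indexFiltration (by omega))
    | k + 3 =>
      rw [H.deriv_e_of_three_le hd (by omega) he1 (by omega), hc, mul_zero, zero_smul, zero_add]
      exact shiftSum_mem fun m hm => left_mem_indexFiltration hm
  · match k with
    | 0 => rw [H.y_eq_zero 0 (by omega), map_zero]; exact zero_mem _
    | 1 =>
      rw [hy1, hc, zero_smul, zero_add]
      exact shiftSum_mem fun m hm => right_mem_indexFiltration hm
    | k + 2 =>
      rw [H.deriv_y_of_two_le hd (by omega) hy1 he1 (by omega), hc, mul_zero, zero_smul, zero_add]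
      exact shiftSum_mem fun m hm => right_mem_indexFiltration hm

end HMulTable

theorem statement12 {V : Type*} [AddCommGroup V] [Module ℂ V]
    (n : ℕ) (β : ℕ → ℂ) (γ : ℂ)
    (bas : Module.Basis (Fin n ⊕ Fin n) ℂ V)
    (eN yN : ℕ → V)
    (heN : ∀ k (h : 1 ≤ k ∧ k ≤ n), eN k = bas (Sum.inl ⟨k - 1, by omega⟩))
    (heN0 : ∀ k, ¬(1 ≤ k ∧ k ≤ n) → eN k = 0)
    (hyN : ∀ k (h : 1 ≤ k ∧ k ≤ n), yN k = bas (Sum.inr ⟨k - 1, by omega⟩))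
    (hyN0 : ∀ k, ¬(1 ≤ k ∧ k ≤ n) → yN k = 0)
    (br : V →ₗ[ℂ] V →ₗ[ℂ] V)
    -- multiplication table (4):
    (hee1 : ∀ i, 1 ≤ i → i ≤ n →
      br (eN i) (eN 1) = if i = 1 then eN 3 else if i = 2 then 0 else eN (i + 1))
    (hee2b : br (eN 2) (eN 2) = γ • eN n)
    (hee2c : ∀ i, 3 ≤ i → i ≤ n →
      br (eN i) (eN 2) = ∑ k ∈ Finset.Icc 4 n, β k • eN (i + k - 2))
    (hee0 : ∀ i j, 1 ≤ i → i ≤ n → 3 ≤ j → j ≤ n → br (eN i) (eN j) = 0)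
    (hye1 : ∀ j, 1 ≤ j → j ≤ n → br (yN j) (eN 1) = yN (j + 1))
    (hye2b : ∀ j, 2 ≤ j → j ≤ n →
      br (yN j) (eN 2) = ∑ k ∈ Finset.Icc 4 n, β k • yN (j + k - 2))
    (hye0 : ∀ j i, 1 ≤ j → j ≤ n → 3 ≤ i → i ≤ n → br (yN j) (eN i) = 0)
    (hey1 : ∀ i, 1 ≤ i → i ≤ n → br (eN i) (yN 1) =
      if i = 1 then (1 / 2 : ℂ) • yN 2 else if i = 2 then 0 else (1 / 2 : ℂ) • yN i)
    (hey0 : ∀ i j, 1 ≤ i → i ≤ n → 2 ≤ j → j ≤ n → br (eN i) (yN j) = 0)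
    (hyy1 : ∀ j, 1 ≤ j → j ≤ n →
      br (yN j) (yN 1) = if j = 1 then eN 1 else eN (j + 1))
    (hyy0 : ∀ j k, 1 ≤ j → j ≤ n → 2 ≤ k → k ≤ n → br (yN j) (yN k) = 0)
    -- d is an even derivation:
    (d : Module.End ℂ V)
    (hdE : ∀ x ∈ Submodule.span ℂ (Set.range fun i : Fin n => bas (Sum.inl i)),
      d x ∈ Submodule.span ℂ (Set.range fun i : Fin n => bas (Sum.inl i)))
    (hdY : ∀ x ∈ Submodule.span ℂ (Set.range fun j : Fin n => bas (Sum.inr j)),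
      d x ∈ Submodule.span ℂ (Set.range fun j : Fin n => bas (Sum.inr j)))
    (hder : ∀ u v : V, d (br u v) = br (d u) v + br u (d v))
    (hγ : γ ≠ 0) (t : ℕ) (ht1 : 4 ≤ t) (ht2 : t ≤ n) (hβ : β t ≠ 0)
    (hcase : Even n ∨ 2 * t ≠ n + 3) :
    ∃ N : ℕ, d ^ N = 0 := by
  have hn : 4 ≤ n := ht1.trans ht2
  have H : HMulTable n β γ br eN yN := ⟨heN0, hyN0, hee1, hee2b, hee2c, hee0, hye1, hye2b, hye0,
    hey1, hey0, hyy1, hyy0⟩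
  have hE : IsBasisSegment bas Sum.inl eN :=
    ⟨Sum.inl_injective, fun k h1 h2 => heN k ⟨h1, h2⟩, heN0⟩
  have hY : IsBasisSegment bas Sum.inr yN :=
    ⟨Sum.inr_injective, fun k h1 h2 => hyN k ⟨h1, h2⟩, hyN0⟩
  obtain ⟨c, hdy1⟩ := hY.exists_eq_sum (hdY _ (hY.mem_span 1))
  rw [sum_Icc_one_eq_smul_add_shiftSum _ (by omega)] at hdy1
  obtain ⟨b, hde2⟩ := hE.exists_eq_sum (hdE _ (hE.mem_span 2))
  have he1 := H.deriv_e_one hder (by omega) hdy1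
  replace hde2 := H.deriv_e_two hE hder (by omega) he1 hde2
  have hb_γ := H.deriv_e_two_coeff_eq_of_gamma_ne_zero hE hder (by omega) he1 hγ hde2
  have hb_β := H.deriv_e_two_coeff_eq_of_beta_ne_zero hY hder hdy1 he1 ht1 ht2 hβ hde2
  have hc : c 1 = 0 := by
    have hnt : (n : ℂ) + 3 - 2 * t ≠ 0 := by
      rw [sub_ne_zero]
      exact_mod_cast (show n + 3 ≠ 2 * t by rcases hcase with ⟨r, hr⟩ | h <;> omega)
    exact (mul_eq_zero.mp (by linear_combination hb_β - hb_γ)).resolve_left hnt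
  rw [hb_γ, hc, mul_zero, zero_smul, zero_add] at hde2
  exact ⟨n, H.pow_deriv_eq_zero hE hY hder (by omega) hdy1 hc hde2⟩
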